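/- arXiv:2112.15146 — 3 statements merged into one kernel-verified Lean document; each statement's English description precedes it below -/
import Mathlib

section
/- For the 6×6 second-order constant-coefficient differential operator L on ℝ² defined via its symbol L̂(ξ), whose blocks correspond to the operator L = ∘∇× ∘∇× (with parameter k ≠ 0), the characteristic polynomial of the symbol satisfies det(L̂(ξ) − λ·Id) = λ²(|ξ|² + k² − λ)⁴ for all ξ ∈ ℝ² and λ ∈ ℂ. -/
open Complex Matrix

/-- The symbol of the operator L = ∘∇× ∘∇× on ℝ² with parameter k. -/
noncomputable def Lhat (k ξ₁ ξ₂ : ℝ) : Matrix (Fin 6) (Fin 6) ℂ :=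
  !![((ξ₂^2 + k^2 : ℝ) : ℂ), ((-(ξ₁*ξ₂) : ℝ) : ℂ), 0, 0, 0, I * k * ξ₁;
     ((-(ξ₁*ξ₂) : ℝ) : ℂ), ((ξ₁^2 + k^2 : ℝ) : ℂ), 0, 0, 0, I * k * ξ₂;
     0, 0, ((ξ₁^2 + ξ₂^2 : ℝ) : ℂ), I * k * ξ₁, I * k * ξ₂, 0;
     0, 0, -(I * k * ξ₁), ((ξ₂^2 + k^2 : ℝ) : ℂ), ((-(ξ₁*ξ₂) : ℝ) : ℂ), 0;
     0, 0, -(I * k * ξ₂), ((-(ξ₁*ξ₂) : ℝ) : ℂ), ((ξ₁^2 + k^2 : ℝ) : ℂ), 0;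
     -(I * k * ξ₁), -(I * k * ξ₂), 0, 0, 0, ((ξ₁^2 + ξ₂^2 : ℝ) : ℂ)]

@[simp]
lemma cons_val_five' {α : Type*} {m : ℕ} (x : α) (u : Fin (m+5) → α) :
    Matrix.vecCons x u 5 =
      Matrix.vecHead (Matrix.vecTail (Matrix.vecTail (Matrix.vecTail (Matrix.vecTail u)))) :=
  rfl

/-- Permutation of indices splitting {0,1,5} and {2,3,4}. -/
def splitEquiv : Fin 6 ≃ (Fin 3 ⊕ Fin 3) where
  toFun := ![Sum.inl 0, Sum.inl 1, Sum.inr 0, Sum.inr 1, Sum.inr 2, Sum.inl 2]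
  invFun := Sum.elim ![0, 1, 5] ![2, 3, 4]
  left_inv := by decide
  right_inv := by decide

set_option maxHeartbeats 1000000 in
/-- det(L̂(ξ) − λ·Id) = λ²(|ξ|² + k² − λ)⁴ for all ξ ∈ ℝ², λ ∈ ℂ. -/
theorem stmt_0 (k : ℝ) (hk : k ≠ 0) (ξ₁ ξ₂ : ℝ) (lam : ℂ) :
    Matrix.det (Lhat k ξ₁ ξ₂ - lam • (1 : Matrix (Fin 6) (Fin 6) ℂ)) =
      lam^2 * (((ξ₁^2 + ξ₂^2 + k^2 : ℝ) : ℂ) - lam)^4 := by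
  set A : Matrix (Fin 3) (Fin 3) ℂ :=
    !![((ξ₂^2 + k^2 : ℝ) : ℂ) - lam, ((-(ξ₁*ξ₂) : ℝ) : ℂ), I * k * ξ₁;
       ((-(ξ₁*ξ₂) : ℝ) : ℂ), ((ξ₁^2 + k^2 : ℝ) : ℂ) - lam, I * k * ξ₂;
       -(I * k * ξ₁), -(I * k * ξ₂), ((ξ₁^2 + ξ₂^2 : ℝ) : ℂ) - lam] with hA
  set B : Matrix (Fin 3) (Fin 3) ℂ :=
    !![((ξ₁^2 + ξ₂^2 : ℝ) : ℂ) - lam, I * k * ξ₁, I * k * ξ₂;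
       -(I * k * ξ₁), ((ξ₂^2 + k^2 : ℝ) : ℂ) - lam, ((-(ξ₁*ξ₂) : ℝ) : ℂ);
       -(I * k * ξ₂), ((-(ξ₁*ξ₂) : ℝ) : ℂ), ((ξ₁^2 + k^2 : ℝ) : ℂ) - lam] with hB
  have hM : Lhat k ξ₁ ξ₂ - lam • (1 : Matrix (Fin 6) (Fin 6) ℂ) =
      (Matrix.fromBlocks A 0 0 B).submatrix splitEquiv splitEquiv := by
    ext i j
    fin_cases i <;> fin_cases j <;>
      simp [Lhat, hA, hB, splitEquiv, Matrix.fromBlocks, Matrix.one_apply,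
        Matrix.cons_val_succ, Matrix.cons_val_zero, Matrix.cons_val_one, Matrix.cons_val_two,
        Matrix.cons_val_three, Matrix.cons_val_four, Fin.ext_iff] <;>
      (try ring) <;> (intro h; exact absurd h (by decide))
  rw [hM, Matrix.det_submatrix_equiv_self, Matrix.det_fromBlocks_zero₂₁,
    Matrix.det_fin_three, Matrix.det_fin_three]
  simp only [hA, hB, Matrix.cons_val', Matrix.cons_val_zero, Matrix.cons_val_one,
    Matrix.head_cons, Matrix.empty_val', Matrix.cons_val_fin_one, Matrix.head_fin_const,
    Matrix.of_apply, Matrix.cons_val_two, Matrix.tail_cons]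
  push_cast
  linear_combination (2*(ξ₂:ℂ)^2*(k:ℂ)^2*lam^4 - 6*(ξ₂:ℂ)^2*(k:ℂ)^4*lam^3 + 6*(ξ₂:ℂ)^2*(k:ℂ)^6*lam^2 - 2*(ξ₂:ℂ)^2*(k:ℂ)^8*lam - 6*(ξ₂:ℂ)^4*(k:ℂ)^2*lam^3 + 13*(ξ₂:ℂ)^4*(k:ℂ)^4*lam^2 + (ξ₂:ℂ)^4*(k:ℂ)^4*lam^2*Complex.I^2 - 8*(ξ₂:ℂ)^4*(k:ℂ)^6*lam - 2*(ξ₂:ℂ)^4*(k:ℂ)^6*lam*Complex.I^2 + (ξ₂:ℂ)^4*(k:ℂ)^8 + (ξ₂:ℂ)^4*(k:ℂ)^8*Complex.I^2 + 6*(ξ₂:ℂ)^6*(k:ℂ)^2*lam^2 - 8*(ξ₂:ℂ)^6*(k:ℂ)^4*lam - 2*(ξ₂:ℂ)^6*(k:ℂ)^4*lam*Complex.I^2 + 2*(ξ₂:ℂ)^6*(k:ℂ)^6 + 2*(ξ₂:ℂ)^6*(k:ℂ)^6*Complex.I^2 - 2*(ξ₂:ℂ)^8*(k:ℂ)^2*lam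 + (ξ₂:ℂ)^8*(k:ℂ)^4 + (ξ₂:ℂ)^8*(k:ℂ)^4*Complex.I^2 + 2*(ξ₁:ℂ)^2*(k:ℂ)^2*lam^4 - 6*(ξ₁:ℂ)^2*(k:ℂ)^4*lam^3 + 6*(ξ₁:ℂ)^2*(k:ℂ)^6*lam^2 - 2*(ξ₁:ℂ)^2*(k:ℂ)^8*lam - 12*(ξ₁:ℂ)^2*(ξ₂:ℂ)^2*(k:ℂ)^2*lam^3 + 26*(ξ₁:ℂ)^2*(ξ₂:ℂ)^2*(k:ℂ)^4*lam^2 + 2*(ξ₁:ℂ)^2*(ξ₂:ℂ)^2*(k:ℂ)^4*lam^2*Complex.I^2 - 16*(ξ₁:ℂ)^2*(ξ₂:ℂ)^2*(k:ℂ)^6*lam - 4*(ξ₁:ℂ)^2*(ξ₂:ℂ)^2*(k:ℂ)^6*lam*Complex.I^2 + 2*(ξ₁:ℂ)^2*(ξ₂:ℂ)^2*(k:ℂ)^8 + 2*(ξ₁:ℂ)^2*(ξ₂:ℂ)^2*(k:ℂ)^8*Complex.I^2 + 18*(ξ₁:ℂ)^2*(ξ₂:ℂ)^4*(k:ℂ)^2*lam^2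 - 24*(ξ₁:ℂ)^2*(ξ₂:ℂ)^4*(k:ℂ)^4*lam - 6*(ξ₁:ℂ)^2*(ξ₂:ℂ)^4*(k:ℂ)^4*lam*Complex.I^2 + 6*(ξ₁:ℂ)^2*(ξ₂:ℂ)^4*(k:ℂ)^6 + 6*(ξ₁:ℂ)^2*(ξ₂:ℂ)^4*(k:ℂ)^6*Complex.I^2 - 8*(ξ₁:ℂ)^2*(ξ₂:ℂ)^6*(k:ℂ)^2*lam + 4*(ξ₁:ℂ)^2*(ξ₂:ℂ)^6*(k:ℂ)^4 + 4*(ξ₁:ℂ)^2*(ξ₂:ℂ)^6*(k:ℂ)^4*Complex.I^2 - 6*(ξ₁:ℂ)^4*(k:ℂ)^2*lam^3 + 13*(ξ₁:ℂ)^4*(k:ℂ)^4*lam^2 + (ξ₁:ℂ)^4*(k:ℂ)^4*lam^2*Complex.I^2 - 8*(ξ₁:ℂ)^4*(k:ℂ)^6*lam - 2*(ξ₁:ℂ)^4*(k:ℂ)^6*lam*Complex.I^2 + (ξ₁:ℂ)^4*(k:ℂ)^8 + (ξ₁:ℂ)^4*(k:ℂ)^8*Complex.I^2 + 18*(ξ₁:ℂ)^4*(ξ₂:ℂ)^2*(k:ℂ)^2*lam^2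 - 24*(ξ₁:ℂ)^4*(ξ₂:ℂ)^2*(k:ℂ)^4*lam - 6*(ξ₁:ℂ)^4*(ξ₂:ℂ)^2*(k:ℂ)^4*lam*Complex.I^2 + 6*(ξ₁:ℂ)^4*(ξ₂:ℂ)^2*(k:ℂ)^6 + 6*(ξ₁:ℂ)^4*(ξ₂:ℂ)^2*(k:ℂ)^6*Complex.I^2 - 12*(ξ₁:ℂ)^4*(ξ₂:ℂ)^4*(k:ℂ)^2*lam + 6*(ξ₁:ℂ)^4*(ξ₂:ℂ)^4*(k:ℂ)^4 + 6*(ξ₁:ℂ)^4*(ξ₂:ℂ)^4*(k:ℂ)^4*Complex.I^2 + 6*(ξ₁:ℂ)^6*(k:ℂ)^2*lam^2 - 8*(ξ₁:ℂ)^6*(k:ℂ)^4*lam - 2*(ξ₁:ℂ)^6*(k:ℂ)^4*lam*Complex.I^2 + 2*(ξ₁:ℂ)^6*(k:ℂ)^6 + 2*(ξ₁:ℂ)^6*(k:ℂ)^6*Complex.I^2 - 8*(ξ₁:ℂ)^6*(ξ₂:ℂ)^2*(k:ℂ)^2*lam + 4*(ξ₁:ℂ)^6*(ξ₂:ℂ)^2*(k:ℂ)^4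 + 4*(ξ₁:ℂ)^6*(ξ₂:ℂ)^2*(k:ℂ)^4*Complex.I^2 - 2*(ξ₁:ℂ)^8*(k:ℂ)^2*lam + (ξ₁:ℂ)^8*(k:ℂ)^4 + (ξ₁:ℂ)^8*(k:ℂ)^4*Complex.I^2) * Complex.I_sq
end

section
/- For every ξ ∈ ℝ² the set of eigenvalues of the Hermitian matrix L̂(ξ) is exactly {0, |ξ|² + k²}, where the eigenvalue 0 has multiplicity 2 and the eigenvalue |ξ|² + k² has multiplicity 4 (counted algebraically). -/
/-!
Write `s = |ξ|² + k²`. Then `L̂(ξ) = s • 1 - U Uᴴ`, where the columns `v = (ξ₁, ξ₂, 0, 0, 0, ik)`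
and `w = (0, 0, k, iξ₁, iξ₂, 0)` of the `6 × 2` matrix `U` are orthogonal with `|v|² = |w|² = s`,
i.e. `Uᴴ U = s • 1`. Hence `L̂(ξ)` is Hermitian, and by Sylvester's identity
`χ(U Uᴴ) = X⁴ χ(Uᴴ U) = X⁴ (X - s)²`; shifting by `s` gives `χ(L̂(ξ)) = X² (X - s)⁴`.
-/

open Complex Matrix Polynomial

namespace Matrix

variable {R m n : Type*} [CommRing R] [Fintype m] [DecidableEq m] [Fintype n] [DecidableEq n]

theorem charpoly_scalar_sub_mul_of_mul_eq_scalar (μ c : R) (U : Matrix n m R)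
    (V : Matrix m n R) (hVU : V * U = scalar m c) (hmn : Fintype.card m ≤ Fintype.card n) :
    (scalar n μ - U * V).charpoly =
      (X - C μ) ^ (Fintype.card n - Fintype.card m) * (X - C (μ - c)) ^ Fintype.card m := by
  have hUV : (U * -V).charpoly =
      X ^ (Fintype.card n - Fintype.card m) * (X - C (-c)) ^ Fintype.card m := by
    rw [charpoly_mul_comm_of_le U (-V) hmn, Matrix.neg_mul, hVU, ← map_neg, scalar_apply,
      charpoly_diagonal, Finset.prod_const, Finset.card_univ]
  have hshift : (U * -V).charpoly = (scalar n μ - U * V).charpoly.comp (X + C μ) := by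
    rw [← charpoly_sub_scalar, Matrix.mul_neg]
    congr 1
    abel
  calc (scalar n μ - U * V).charpoly
      = ((scalar n μ - U * V).charpoly.comp (X + C μ)).comp (X - C μ) := by
        rw [comp_assoc]; simp
    _ = _ := by
        rw [← hshift, hUV]
        simp only [mul_comp, pow_comp, X_comp, sub_comp, C_comp, neg_comp, map_neg, map_sub]
        ring

end Matrix

noncomputable def LhatFactor (k ξ₁ ξ₂ : ℝ) : Matrix (Fin 6) (Fin 2) ℂ :=
  !![ξ₁, 0; ξ₂, 0; 0, k; 0, I * ξ₁; 0, I * ξ₂; I * k, 0]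

theorem Lhat_eq_scalar_sub_mul_conjTranspose (k ξ₁ ξ₂ : ℝ) :
    Lhat k ξ₁ ξ₂ = scalar (Fin 6) ((ξ₁^2 + ξ₂^2 + k^2 : ℝ) : ℂ) -
      LhatFactor k ξ₁ ξ₂ * (LhatFactor k ξ₁ ξ₂)ᴴ := by
  ext i j
  simp only [Matrix.sub_apply, mul_apply, conjTranspose_apply, Fin.sum_univ_two, scalar_apply,
    diagonal_apply]
  fin_cases i <;> fin_cases j <;> simp [Lhat, LhatFactor, Complex.ext_iff, sq] <;> ring

theorem conjTranspose_LhatFactor_mul_self (k ξ₁ ξ₂ : ℝ) :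
    (LhatFactor k ξ₁ ξ₂)ᴴ * LhatFactor k ξ₁ ξ₂ =
      scalar (Fin 2) ((ξ₁^2 + ξ₂^2 + k^2 : ℝ) : ℂ) := by
  ext i j
  simp only [mul_apply, conjTranspose_apply, Fin.sum_univ_succ, Fin.sum_univ_zero, scalar_apply,
    diagonal_apply]
  fin_cases i <;> fin_cases j <;> simp [LhatFactor, Complex.ext_iff, sq] <;> ring

theorem isHermitian_Lhat (k ξ₁ ξ₂ : ℝ) : (Lhat k ξ₁ ξ₂).IsHermitian := by
  rw [Lhat_eq_scalar_sub_mul_conjTranspose]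
  exact (isHermitian_diagonal_of_self_adjoint _ (funext fun _ => Complex.conj_ofReal _)).sub
    (isHermitian_mul_conjTranspose_self _)

theorem charpoly_Lhat (k ξ₁ ξ₂ : ℝ) :
    (Lhat k ξ₁ ξ₂).charpoly = X ^ 2 * (X - C ((ξ₁^2 + ξ₂^2 + k^2 : ℝ) : ℂ)) ^ 4 := by
  rw [Lhat_eq_scalar_sub_mul_conjTranspose, charpoly_scalar_sub_mul_of_mul_eq_scalar _ _ _ _
    (conjTranspose_LhatFactor_mul_self k ξ₁ ξ₂) (by simp)]
  simp only [sub_self, map_zero, sub_zero, Fintype.card_fin]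
  ring

theorem stmt_2_general (k : ℝ) (ξ₁ ξ₂ : ℝ) :
    (Lhat k ξ₁ ξ₂).IsHermitian ∧
    (Lhat k ξ₁ ξ₂).charpoly =
      X^2 * (X - C ((ξ₁^2 + ξ₂^2 + k^2 : ℝ) : ℂ))^4 ∧
    spectrum ℂ (Lhat k ξ₁ ξ₂) = {0, ((ξ₁^2 + ξ₂^2 + k^2 : ℝ) : ℂ)} := by
  refine ⟨isHermitian_Lhat k ξ₁ ξ₂, charpoly_Lhat k ξ₁ ξ₂, ?_⟩
  ext μ
  simp [mem_spectrum_iff_isRoot_charpoly, charpoly_Lhat, sub_eq_zero]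

/-- For every ξ ∈ ℝ², the Hermitian matrix L̂(ξ) has eigenvalues exactly {0, |ξ|²+k²},
with 0 of algebraic multiplicity 2 and |ξ|²+k² of algebraic multiplicity 4, i.e. its
characteristic polynomial is X²·(X − (|ξ|²+k²))⁴, and its spectrum is {0, |ξ|²+k²}. -/
theorem stmt_2 (k : ℝ) (hk : k ≠ 0) (ξ₁ ξ₂ : ℝ) :
    (Lhat k ξ₁ ξ₂).IsHermitian ∧
    (Lhat k ξ₁ ξ₂).charpoly =
      X^2 * (X - C ((ξ₁^2 + ξ₂^2 + k^2 : ℝ) : ℂ))^4 ∧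
    spectrum ℂ (Lhat k ξ₁ ξ₂) = {0, ((ξ₁^2 + ξ₂^2 + k^2 : ℝ) : ℂ)} :=
  stmt_2_general k ξ₁ ξ₂
end

section
/- Let F : ℝ^N → [0,∞) be C¹ with gradient f, and say that F satisfies condition (F5) if whenever ⟨f(u),v⟩ = ⟨f(v),u⟩ > 0 one has F(u) − F(v) ≤ (⟨f(u),u⟩² − ⟨f(u),v⟩²)/(2⟨f(u),u⟩), and ⟨f(u),u⟩ ≥ 2F(u) for all u. Then for F isotropic, i.e. F(u) = χ(|u|²/2) with χ : [0,∞) → [0,∞), χ(0) = 0, χ' nondecreasing and nonnegative, condition (F5) holds. -/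
open scoped RealInnerProductSpace

lemma tangent_aux (χ : ℝ → ℝ) (hχdiff : Differentiable ℝ χ)
    (hd_mono : MonotoneOn (deriv χ) (Set.Ici (0:ℝ)))
    {x y : ℝ} (hx : 0 ≤ x) (hy : 0 ≤ y) :
    χ x - χ y ≤ deriv χ x * (x - y) := by
  rcases lt_trichotomy x y with h | h | h
  · obtain ⟨c, hc, hceq⟩ := exists_hasDerivAt_eq_slope χ (deriv χ) h
      (hχdiff.continuous.continuousOn)
      (fun z _ => (hχdiff z).hasDerivAt)
    have hcx : x ≤ c := le_of_lt hc.1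
    have hmono := hd_mono (Set.mem_Ici.mpr hx) (Set.mem_Ici.mpr (hx.trans hcx)) hcx
    have hyx : 0 < y - x := by linarith
    have : χ y - χ x = deriv χ c * (y - x) := by
      field_simp at hceq; linarith [hceq]
    nlinarith
  · simp [h]
  · obtain ⟨c, hc, hceq⟩ := exists_hasDerivAt_eq_slope χ (deriv χ) h
      (hχdiff.continuous.continuousOn)
      (fun z _ => (hχdiff z).hasDerivAt)
    have hcx : c ≤ x := le_of_lt hc.2
    have hc0 : 0 ≤ c := le_trans hy (le_of_lt hc.1)
    have hmono := hd_mono (Set.mem_Ici.mpr hc0) (Set.mem_Ici.mpr hx) hcx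
    have hyx : 0 < x - y := by linarith
    have : χ x - χ y = deriv χ c * (x - y) := by
      field_simp at hceq; linarith [hceq]
    nlinarith

/-- For isotropic F(u) = χ(|u|²/2) with χ(0) = 0 and χ' nonnegative and nondecreasing on
[0,∞), condition (F5) holds: whenever ⟨f(u),v⟩ = ⟨f(v),u⟩ > 0 one has
F(u) − F(v) ≤ (⟨f(u),u⟩² − ⟨f(u),v⟩²)/(2⟨f(u),u⟩), and ⟨f(u),u⟩ ≥ 2F(u) for all u,
where f(u) = χ'(|u|²/2)·u is the gradient of F. -/
theorem stmt_7 (N : ℕ) (χ : ℝ → ℝ)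
    (hχdiff : Differentiable ℝ χ) (hχ0 : χ 0 = 0)
    (hχnonneg : ∀ s, 0 ≤ s → 0 ≤ χ s)
    (hd_nonneg : ∀ s, 0 ≤ s → 0 ≤ deriv χ s)
    (hd_mono : MonotoneOn (deriv χ) (Set.Ici (0:ℝ)))
    (F : EuclideanSpace ℝ (Fin N) → ℝ) (f : EuclideanSpace ℝ (Fin N) → EuclideanSpace ℝ (Fin N))
    (hF : ∀ u, F u = χ (‖u‖ ^ 2 / 2))
    (hf : ∀ u, f u = deriv χ (‖u‖ ^ 2 / 2) • u) :
    (∀ u v : EuclideanSpace ℝ (Fin N),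
        ⟪f u, v⟫ = ⟪f v, u⟫ → 0 < ⟪f u, v⟫ →
        F u - F v ≤ (⟪f u, u⟫ ^ 2 - ⟪f u, v⟫ ^ 2) / (2 * ⟪f u, u⟫)) ∧
    (∀ u : EuclideanSpace ℝ (Fin N), 2 * F u ≤ ⟪f u, u⟫) := by
  constructor
  · intro u v heq hpos
    set s := ‖u‖ ^ 2 / 2 with hs_def
    set t := ‖v‖ ^ 2 / 2 with ht_def
    have hs0 : 0 ≤ s := by positivity
    have ht0 : 0 ≤ t := by positivity
    set a := deriv χ s with ha_def
    set b := deriv χ t with hb_def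
    set p : ℝ := ⟪u, v⟫ with hp_def
    have hfuv : ⟪f u, v⟫ = a * p := by rw [hf]; exact real_inner_smul_left _ _ _
    have hfvu : ⟪f v, u⟫ = b * p := by
      rw [hf, real_inner_smul_left, real_inner_comm]
    have ha0 : 0 ≤ a := hd_nonneg s hs0
    rw [hfuv] at hpos
    have hap : 0 < a := by
      rcases ha0.lt_or_eq with h | h; · exact h
      · exfalso; rw [← h] at hpos; simp at hpos
    have hp0 : 0 < p := by nlinarith
    have hab : a = b := by
      rw [hfuv, hfvu] at heq
      exact mul_right_cancel₀ (ne_of_gt hp0) heq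
    have hfuu : ⟪f u, u⟫ = 2 * a * s := by
      rw [hf, real_inner_smul_left, real_inner_self_eq_norm_sq]; ring
    have hspos : 0 < s := by
      rcases hs0.lt_or_eq with h | h; · exact h
      · exfalso
        have : ‖u‖ = 0 := by
          have := h.symm; rw [hs_def] at this; nlinarith [norm_nonneg u]
        have hu0 : u = 0 := norm_eq_zero.mp this
        rw [hu0] at hp_def
        simp [hp_def] at hp0
    have hcs : p ^ 2 ≤ 4 * s * t := by
      have h1 := abs_real_inner_le_norm u v
      have : p ≤ ‖u‖ * ‖v‖ := le_trans (le_abs_self _) h1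
      nlinarith [norm_nonneg u, norm_nonneg v]
    have htan : χ s - χ t ≤ a * (s - t) := tangent_aux χ hχdiff hd_mono hs0 ht0
    rw [hF, hF, hfuu, hfuv, ← hs_def, ← ht_def]
    rw [le_div_iff₀ (by positivity)]
    nlinarith [mul_le_mul_of_nonneg_left htan (by positivity : (0:ℝ) ≤ 4 * a * s),
      mul_le_mul_of_nonneg_left hcs (sq_nonneg a)]
  · intro u
    set s := ‖u‖ ^ 2 / 2 with hs_def
    have hs0 : 0 ≤ s := by positivity
    have htan : χ s - χ 0 ≤ deriv χ s * (s - 0) := tangent_aux χ hχdiff hd_mono hs0 le_rfl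
    have hfuu : ⟪f u, u⟫ = deriv χ s * ‖u‖ ^ 2 := by
      rw [hf, real_inner_smul_left, real_inner_self_eq_norm_sq]
    rw [hF, hfuu, ← hs_def]
    rw [hχ0] at htan
    have h2 : deriv χ s * ‖u‖ ^ 2 = 2 * (deriv χ s * s) := by rw [hs_def]; ring
    linarith
end
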